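/- arXiv:2602.09055 — 3 statements merged into one kernel-verified Lean document; each statement's English description precedes it below -/
import Mathlib

section
/- Let Θ > 0 be a real number and let η ∈ ℂ with Im η > 0. Set β := (Θ : ℂ). Then |i·β·coth(−i·β·η) − i·β| ≤ 2Θ/(e^{2Θ·Im η} − 1), where coth z := (e^{z} + e^{-z})/(e^{z} − e^{-z}). -/
/-! With `z = -iΘη` one has `iΘ (coth z - 1) = 2iΘ / (e^{2z} - 1)`. Since `Re (2z) = 2Θ Im η`,
the reverse triangle inequality gives `|e^{2z} - 1| ≥ |e^{2Θ Im η} - 1|`, and the absolute values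
can be dropped because `Θ` and `e^{2Θ Im η} - 1` have the same sign. -/

open Complex

lemma exp_add_exp_neg_div_exp_sub_exp_neg_sub_one {z : ℂ} (hz : exp (2 * z) ≠ 1) :
    (exp z + exp (-z)) / (exp z - exp (-z)) - 1 = 2 / (exp (2 * z) - 1) := by
  have hprod : exp z * exp (-z) = 1 := by rw [← exp_add, add_neg_cancel, exp_zero]
  have hden : exp z * (exp z - exp (-z)) = exp (2 * z) - 1 := by
    rw [mul_sub, hprod, ← exp_add, two_mul]
  have hne : exp z - exp (-z) ≠ 0 := right_ne_zero_of_mul (hden ▸ sub_ne_zero.2 hz)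
  rw [div_sub_one hne, ← mul_div_mul_left _ _ (exp_ne_zero z), hden]
  congr 1
  linear_combination 2 * hprod

lemma Complex.exp_ne_one_of_re_ne_zero {w : ℂ} (hw : w.re ≠ 0) : exp w ≠ 1 := by
  intro h
  have := congrArg norm h
  rw [norm_exp, norm_one, Real.exp_eq_one_iff] at this
  exact hw this

lemma Complex.norm_inv_exp_sub_one_le {w : ℂ} (hw : w.re ≠ 0) :
    ‖(exp w - 1)⁻¹‖ ≤ |Real.exp w.re - 1|⁻¹ := by
  have hpos : 0 < |Real.exp w.re - 1| :=
    abs_pos.2 (sub_ne_zero.2 fun h => hw (Real.exp_eq_one_iff _ |>.1 h))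
  rw [norm_inv]
  refine inv_anti₀ hpos ?_
  simpa [norm_exp] using abs_norm_sub_norm_le (exp w) 1

lemma Real.div_exp_mul_sub_one_nonneg (x : ℝ) {t : ℝ} (ht : 0 ≤ t) :
    0 ≤ x / (Real.exp (x * t) - 1) := by
  rcases le_total x 0 with hx | hx
  · exact div_nonneg_of_nonpos hx
      (sub_nonpos.2 (Real.exp_le_one_iff.2 (mul_nonpos_of_nonpos_of_nonneg hx ht)))
  · exact div_nonneg hx (sub_nonneg.2 (Real.one_le_exp (mul_nonneg hx ht)))

theorem pml_dtn_mode_propagating_general (Θ : ℝ) (η : ℂ) (hη : 0 < η.im) :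
    ‖Complex.I * (Θ : ℂ) *
        ((Complex.exp (-Complex.I * (Θ : ℂ) * η) + Complex.exp (-(-Complex.I * (Θ : ℂ) * η))) /
          (Complex.exp (-Complex.I * (Θ : ℂ) * η) - Complex.exp (-(-Complex.I * (Θ : ℂ) * η))))
        - Complex.I * (Θ : ℂ)‖
      ≤ 2 * Θ / (Real.exp (2 * Θ * η.im) - 1) := by
  rcases eq_or_ne Θ 0 with rfl | hΘ
  · simp
  set z : ℂ := -I * Θ * η
  have hre : (2 * z).re = 2 * Θ * η.im := by
    simp only [z, neg_mul, mul_neg, neg_re, mul_re, re_ofNat, I_re, ofReal_re, zero_mul, I_im,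
      ofReal_im, mul_zero, sub_self, mul_im, one_mul, zero_add, zero_sub, im_ofNat, sub_zero, neg_neg]
    ring
  have hre_ne : (2 * z).re ≠ 0 := hre ▸ by positivity
  rw [← mul_sub_one, exp_add_exp_neg_div_exp_sub_exp_neg_sub_one (exp_ne_one_of_re_ne_zero hre_ne)]
  calc ‖I * Θ * (2 / (exp (2 * z) - 1))‖
      = 2 * |Θ| * ‖(exp (2 * z) - 1)⁻¹‖ := by
        simp only [div_eq_mul_inv, norm_mul, norm_I, norm_real, Real.norm_eq_abs, norm_ofNat, norm_inv]
        ring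
    _ ≤ 2 * |Θ| * |Real.exp (2 * Θ * η.im) - 1|⁻¹ := by
        rw [← hre]; gcongr; exact norm_inv_exp_sub_one_le hre_ne
    _ = |2 * Θ / (Real.exp (2 * Θ * η.im) - 1)| := by
        rw [abs_div, abs_mul, abs_two, div_eq_mul_inv]
    _ = 2 * Θ / (Real.exp (2 * Θ * η.im) - 1) :=
        abs_of_nonneg (Real.div_exp_mul_sub_one_nonneg _ hη.le)

/-- per-mode PML DtN estimate, propagating mode (β = Θ real, Im η > 0). -/
theorem pml_dtn_mode_propagating (Θ : ℝ) (hΘ : 0 < Θ) (η : ℂ) (hη : 0 < η.im) :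
    ‖Complex.I * (Θ : ℂ) *
        ((Complex.exp (-Complex.I * (Θ : ℂ) * η) + Complex.exp (-(-Complex.I * (Θ : ℂ) * η))) /
          (Complex.exp (-Complex.I * (Θ : ℂ) * η) - Complex.exp (-(-Complex.I * (Θ : ℂ) * η))))
        - Complex.I * (Θ : ℂ)‖
      ≤ 2 * Θ / (Real.exp (2 * Θ * η.im) - 1) :=
  pml_dtn_mode_propagating_general Θ η hη
end

section
/- Let Θ > 0 be a real number and let η ∈ ℂ with Re η > 0. Set β := i·(Θ : ℂ). Then |i·β·coth(−i·β·η) − i·β| ≤ 2Θ/(e^{2Θ·Re η} − 1), where coth z := (e^{z} + e^{-z})/(e^{z} − e^{-z}). -/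
/-!
With `β = iΘ` the PML symbol is `iβ coth(-iβη) = -Θ coth(Θη)`, and for `Re z > 0`
`coth z - 1 = 2 / (e^{2z} - 1)` with `|e^{2z} - 1| ≥ |e^{2z}| - 1 = e^{2 Re z} - 1 > 0`.
-/

open Complex

namespace Complex

noncomputable def coth (z : ℂ) : ℂ := (exp z + exp (-z)) / (exp z - exp (-z))

theorem exp_sub_exp_neg_ne_zero {z : ℂ} (hz : exp (2 * z) ≠ 1) : exp z - exp (-z) ≠ 0 := by
  intro h
  apply hz
  rw [two_mul, exp_add]
  nth_rw 1 [sub_eq_zero.mp h]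
  rw [← exp_add, neg_add_cancel, exp_zero]

theorem coth_sub_one {z : ℂ} (hz : exp (2 * z) ≠ 1) :
    coth z - 1 = 2 / (exp (2 * z) - 1) := by
  have hsub := exp_sub_exp_neg_ne_zero hz
  have hsub' : exp (2 * z) - 1 ≠ 0 := sub_ne_zero.mpr hz
  rw [coth, div_sub_one hsub, div_eq_div_iff hsub hsub', two_mul, exp_add, exp_neg]
  field_simp
  ring

theorem real_exp_re_sub_one_le_norm_exp_sub_one (w : ℂ) :
    Real.exp w.re - 1 ≤ ‖exp w - 1‖ := by
  simpa [norm_exp] using norm_sub_norm_le (exp w) 1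

theorem norm_coth_sub_one_le {z : ℂ} (hz : 0 < z.re) :
    ‖coth z - 1‖ ≤ 2 / (Real.exp (2 * z.re) - 1) := by
  have hpos : 0 < Real.exp (2 * z.re) - 1 := by
    simpa using Real.one_lt_exp_iff.mpr (by positivity : 0 < 2 * z.re)
  have hlow : Real.exp (2 * z.re) - 1 ≤ ‖exp (2 * z) - 1‖ := by
    simpa only [mul_re, re_ofNat, im_ofNat, zero_mul, sub_zero] using
      real_exp_re_sub_one_le_norm_exp_sub_one (2 * z)
  have hne : exp (2 * z) ≠ 1 := by
    intro h
    rw [h, sub_self, norm_zero] at hlow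
    linarith
  rw [coth_sub_one hne, norm_div, Complex.norm_ofNat]
  gcongr

end Complex

/-- per-mode PML DtN estimate, evanescent mode (β = iΘ, Re η > 0). -/
theorem pml_dtn_mode_evanescent (Θ : ℝ) (hΘ : 0 < Θ) (η : ℂ) (hη : 0 < η.re) :
    ‖(Complex.I * (Complex.I * (Θ : ℂ)) *
        ((Complex.exp (-Complex.I * (Complex.I * (Θ : ℂ)) * η) +
            Complex.exp (-(-Complex.I * (Complex.I * (Θ : ℂ)) * η))) /
          (Complex.exp (-Complex.I * (Complex.I * (Θ : ℂ)) * η) -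
            Complex.exp (-(-Complex.I * (Complex.I * (Θ : ℂ)) * η))))
        - Complex.I * (Complex.I * (Θ : ℂ)))‖
      ≤ 2 * Θ / (Real.exp (2 * Θ * η.re) - 1) := by
  have hβ : I * (I * Θ) = -Θ := by rw [← mul_assoc, I_mul_I, neg_one_mul]
  have harg : -I * (I * Θ) * η = Θ * η := by rw [neg_mul, hβ, neg_neg]
  have hre : 0 < ((Θ : ℂ) * η).re := by simpa using mul_pos hΘ hη
  rw [harg, hβ]
  calc ‖-(Θ : ℂ) * coth (Θ * η) - -Θ‖ = Θ * ‖coth (Θ * η) - 1‖ := by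
        rw [← mul_sub_one, norm_mul, norm_neg, norm_real, Real.norm_of_nonneg hΘ.le]
    _ ≤ Θ * (2 / (Real.exp (2 * ((Θ : ℂ) * η).re) - 1)) := by
        gcongr; exact norm_coth_sub_one_le hre
    _ = 2 * Θ / (Real.exp (2 * Θ * η.re) - 1) := by
        simp only [mul_re, ofReal_re, ofReal_im, zero_mul, sub_zero]
        ring_nf
end

section
/- Let h₂ < h₁ be real numbers and let f : ℝ → ℂ be continuously differentiable on the closed interval [h₂, h₁]. Then |f(h₁)|² ≤ (1 + (h₁ − h₂)⁻¹) · ∫_{h₂}^{h₁} (|f(t)|² + |f'(t)|²) dt. -/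
/-!
Let `g = ‖f‖²`. Since `g` is continuous it attains its minimum on `[h₂, h₁]` at some `s`, and
`(h₁ - h₂) g(s) ≤ ∫ g`. Between `s` and `h₁` the fundamental theorem of calculus gives
`g(h₁) ≤ g(s) + ∫ g'`, and `g' = 2⟪f, f'⟫ ≤ ‖f‖² + ‖f'‖²`.
-/

open Set MeasureTheory intervalIntegral

open scoped RealInnerProductSpace

theorem two_mul_real_inner_le_norm_sq_add_norm_sq {E : Type*} [NormedAddCommGroup E]
    [InnerProductSpace ℝ E] (x y : E) : 2 * ⟪x, y⟫ ≤ ‖x‖ ^ 2 + ‖y‖ ^ 2 :=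
  calc 2 * ⟪x, y⟫ ≤ 2 * (‖x‖ * ‖y‖) := by gcongr; exact real_inner_le_norm x y
    _ = 2 * ‖x‖ * ‖y‖ := by ring
    _ ≤ ‖x‖ ^ 2 + ‖y‖ ^ 2 := two_mul_le_add_sq _ _

section RealFunctions

variable {g g' G : ℝ → ℝ} {a b : ℝ}

theorem exists_mul_le_integral_of_le (hab : a ≤ b) (hg : ContinuousOn g (Icc a b))
    (hG : IntegrableOn G (Icc a b)) (hgG : ∀ x ∈ Icc a b, g x ≤ G x) :
    ∃ s ∈ Icc a b, (b - a) * g s ≤ ∫ x in a..b, G x := by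
  obtain ⟨s, hs, hmin⟩ := isCompact_Icc.exists_isMinOn (nonempty_Icc.2 hab) hg
  refine ⟨s, hs, ?_⟩
  calc (b - a) * g s = ∫ _ in a..b, g s := by simp
    _ ≤ ∫ x in a..b, G x :=
      integral_mono_on hab intervalIntegrable_const
        ((intervalIntegrable_iff_integrableOn_Icc_of_le hab).2 hG)
        fun x hx => (hmin hx).trans (hgG x hx)

theorem le_add_integral_of_hasDeriv_right_of_le {s : ℝ} (hs : s ∈ Icc a b)
    (hg : ContinuousOn g (Icc a b))
    (hderiv : ∀ x ∈ Ioo a b, HasDerivWithinAt g (g' x) (Ioi x) x)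
    (hG : IntegrableOn G (Icc a b)) (hG_nonneg : ∀ x ∈ Icc a b, 0 ≤ G x)
    (hg'G : ∀ x ∈ Ioo a b, g' x ≤ G x) :
    g b ≤ g s + ∫ x in a..b, G x := by
  have hsub : Icc s b ⊆ Icc a b := Icc_subset_Icc_left hs.1
  have hftc : g b - g s ≤ ∫ x in s..b, G x :=
    sub_le_integral_of_hasDeriv_right_of_le hs.2 (hg.mono hsub)
      (fun x hx => hderiv x ⟨hs.1.trans_lt hx.1, hx.2⟩) (hG.mono_set hsub)
      fun x hx => hg'G x ⟨hs.1.trans_lt hx.1, hx.2⟩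
  have hmono : ∫ x in s..b, G x ≤ ∫ x in a..b, G x :=
    integral_mono_interval hs.1 hs.2 le_rfl
      ((ae_restrict_mem measurableSet_Ioc).mono fun x hx => hG_nonneg x (Ioc_subset_Icc_self hx))
      ((intervalIntegrable_iff_integrableOn_Icc_of_le (hs.1.trans hs.2)).2 hG)
  linarith

theorem le_one_add_inv_mul_integral_of_hasDeriv_right_of_le (hab : a < b)
    (hg : ContinuousOn g (Icc a b))
    (hderiv : ∀ x ∈ Ioo a b, HasDerivWithinAt g (g' x) (Ioi x) x)
    (hG : IntegrableOn G (Icc a b)) (hG_nonneg : ∀ x ∈ Icc a b, 0 ≤ G x)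
    (hgG : ∀ x ∈ Icc a b, g x ≤ G x) (hg'G : ∀ x ∈ Ioo a b, g' x ≤ G x) :
    g b ≤ (1 + (b - a)⁻¹) * ∫ x in a..b, G x := by
  obtain ⟨s, hs, hmean⟩ := exists_mul_le_integral_of_le hab.le hg hG hgG
  have hmin : g s ≤ (b - a)⁻¹ * ∫ x in a..b, G x := by
    rwa [inv_mul_eq_div, le_div_iff₀ (sub_pos.2 hab), mul_comm]
  calc g b ≤ g s + ∫ x in a..b, G x :=
        le_add_integral_of_hasDeriv_right_of_le hs hg hderiv hG hG_nonneg hg'G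
    _ ≤ (1 + (b - a)⁻¹) * ∫ x in a..b, G x := by linarith

end RealFunctions

theorem norm_sq_le_one_add_inv_mul_integral_norm_sq_add_norm_sq {E : Type*}
    [NormedAddCommGroup E] [InnerProductSpace ℝ E] {a b : ℝ} (hab : a < b) {f f' : ℝ → E}
    (hderiv : ∀ t ∈ Icc a b, HasDerivWithinAt f (f' t) (Icc a b) t)
    (hcont : ContinuousOn f' (Icc a b)) :
    ‖f b‖ ^ 2 ≤ (1 + (b - a)⁻¹) * ∫ t in a..b, (‖f t‖ ^ 2 + ‖f' t‖ ^ 2) := by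
  have hf : ContinuousOn f (Icc a b) := fun t ht => (hderiv t ht).continuousWithinAt
  refine le_one_add_inv_mul_integral_of_hasDeriv_right_of_le (g' := fun t => 2 * ⟪f t, f' t⟫)
    hab (hf.norm.pow 2) (fun t ht => ?_)
    ((hf.norm.pow 2).add (hcont.norm.pow 2)).integrableOn_Icc
    (fun t _ => by positivity) (fun t _ => le_add_of_nonneg_right (by positivity))
    fun t _ => two_mul_real_inner_le_norm_sq_add_norm_sq (f t) (f' t)
  exact ((hderiv t (Ioo_subset_Icc_self ht)).hasDerivAt
    (Icc_mem_nhds ht.1 ht.2)).norm_sq.hasDerivWithinAt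

/-- one-dimensional trace inequality with constant 1 + (h₁ − h₂)⁻¹. -/
theorem trace_inequality_1d (h₂ h₁ : ℝ) (hlt : h₂ < h₁) (f f' : ℝ → ℂ)
    (hderiv : ∀ t ∈ Set.Icc h₂ h₁, HasDerivWithinAt f (f' t) (Set.Icc h₂ h₁) t)
    (hcont : ContinuousOn f' (Set.Icc h₂ h₁)) :
    ‖f h₁‖ ^ 2
      ≤ (1 + (h₁ - h₂)⁻¹) *
          ∫ t in h₂..h₁, (‖f t‖ ^ 2 + ‖f' t‖ ^ 2) :=
  norm_sq_le_one_add_inv_mul_integral_norm_sq_add_norm_sq hlt hderiv hcont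
end
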